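/- For every even integer q ≥ 2 there exists β* > 0 such that for every real β with |β| ≤ β*: the power series Φ(z) = Σ_{v≥1} μ_v z^v converges absolutely for all |z| ≤ 2 (and is analytic on |z| < 2), and there exists a unique real t* in the interval (1/2, 3/2) satisfying t*·Φ'(t*) = 1. -/

import Mathlib

open MeasureTheory Filter

noncomputable section

namespace SYK

attribute [local instance] Classical.propDecidable

/-- The chord crossing sign `K(x,y)`. -/
def K (x y : ℝ × ℝ) : ℝ :=
  if (x.1 < y.1 ∧ y.1 < x.2 ∧ x.2 < y.2) ∨ (y.1 < x.1 ∧ x.1 < y.2 ∧ y.2 < x.2) then -1 else 1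

lemma K_symm (x y : ℝ × ℝ) : K x y = K y x := if_congr or_comm rfl rfl

/-- The law of `(min U₁ U₂, max U₁ U₂)` for `U₁, U₂` i.i.d. uniform on `[0,1]`. -/
def nu : Measure (ℝ × ℝ) :=
  Measure.map (fun p : ℝ × ℝ => (min p.1 p.2, max p.1 p.2))
    (volume.restrict (Set.Icc (0 : ℝ) 1 ×ˢ Set.Icc (0 : ℝ) 1))

/-- Two vertices are related if some hyperedge of `E` contains both. -/
def edgeRel {N : ℕ} (E : Finset (Finset (Fin N))) (a b : Fin N) : Prop :=
  ∃ e ∈ E, a ∈ e ∧ b ∈ e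

/-- A hypergraph on the full vertex set `Fin N` is connected. -/
def HGConnected {N : ℕ} (E : Finset (Finset (Fin N))) : Prop :=
  ∀ a b : Fin N, Relation.ReflTransGen (edgeRel E) a b

/-- `E` is a `q`-uniform hypertree on the vertex set `Fin N`. -/
def IsHypertree (q N : ℕ) (E : Finset (Finset (Fin N))) : Prop :=
  (∀ e ∈ E, e.card = q) ∧ HGConnected E ∧ (q - 1) * E.card = N - 1

/-- The set `𝒯_N` of `q`-uniform hypertrees on `{1,…,N}`. -/
def trees (q N : ℕ) : Finset (Finset (Finset (Fin N))) :=
  Finset.univ.filter (IsHypertree q N)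

/-- Sign contributed by an unordered pair of hyperedges with chords given by `X`. -/
def pairSign {N : ℕ} (X : Finset (Fin N) → ℝ × ℝ) : Sym2 (Finset (Fin N)) → ℝ :=
  Sym2.lift ⟨fun e₁ e₂ => if Odd (e₁ ∩ e₂).card then K (X e₁) (X e₂) else 1,
    fun e₁ e₂ => if_congr (by rw [Finset.inter_comm]) (K_symm _ _) rfl⟩

/-- `B_H(X)`: the product of `K(X(e₁),X(e₂))` over unordered pairs of distinct
hyperedges sharing an odd number of vertices. -/
def BE {N : ℕ} (E : Finset (Finset (Fin N))) (X : Finset (Fin N) → ℝ × ℝ) : ℝ :=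
  ∏ p ∈ E.sym2.filter (fun p => ¬ p.IsDiag), pairSign X p

/-- `b_H`: the expectation of `B_H(X)` over i.i.d. chords with law `ν`. -/
def bT {N : ℕ} (E : Finset (Finset (Fin N))) : ℝ :=
  ∫ X : Finset (Fin N) → ℝ × ℝ, BE E X ∂(Measure.pi fun _ => nu)

/-- `ρ = ((q−1)! β² / 2^{q+1})^{1/(q−1)}`. -/
def rho (q : ℕ) (β : ℝ) : ℝ :=
  (((q - 1).factorial * β ^ 2 / 2 ^ (q + 1) : ℝ)) ^ ((q : ℝ) - 1)⁻¹

/-- `μ_v = (ρ^{v−1}/v!) Σ_{T ∈ 𝒯_v} b_T`. -/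
def mu (q : ℕ) (β : ℝ) (v : ℕ) : ℝ :=
  rho q β ^ (v - 1) / v.factorial * ∑ E ∈ trees q v, bT E

/-- The power series `Φ(z) = Σ_{v ≥ 1} μ_v z^v` (complex version). -/
def PhiC (q : ℕ) (β : ℝ) (z : ℂ) : ℂ :=
  ∑' v : ℕ, (mu q β (v + 1) : ℂ) * z ^ (v + 1)

/-- The power series `Φ(t) = Σ_{v ≥ 1} μ_v t^v` (real version). -/
def PhiR (q : ℕ) (β : ℝ) (t : ℝ) : ℝ :=
  ∑' v : ℕ, mu q β (v + 1) * t ^ (v + 1)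

lemma abs_K (x y : ℝ × ℝ) : |K x y| = 1 := by
  unfold K; split_ifs <;> norm_num

lemma abs_pairSign {N : ℕ} (X : Finset (Fin N) → ℝ × ℝ) (p : Sym2 (Finset (Fin N))) :
    |pairSign X p| = 1 := by
  induction p using Sym2.ind with
  | _ e₁ e₂ =>
    rw [pairSign, Sym2.lift_mk]
    dsimp only
    split_ifs
    · exact abs_K _ _
    · norm_num

instance nu_prob : IsProbabilityMeasure nu := by
  have hm : Measurable fun p : ℝ × ℝ => (min p.1 p.2, max p.1 p.2) :=
    (measurable_fst.min measurable_snd).prodMk (measurable_fst.max measurable_snd)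
  have hbase : IsProbabilityMeasure
      (volume.restrict (Set.Icc (0 : ℝ) 1 ×ˢ Set.Icc (0 : ℝ) 1)) := by
    constructor
    rw [Measure.restrict_apply_univ, Measure.volume_eq_prod ℝ ℝ, Measure.prod_prod, Real.volume_Icc]
    simp
  exact Measure.isProbabilityMeasure_map hm.aemeasurable

lemma abs_BE {N : ℕ} (E : Finset (Finset (Fin N))) (X : Finset (Fin N) → ℝ × ℝ) :
    |BE E X| = 1 := by
  rw [BE, Finset.abs_prod]
  rw [Finset.prod_congr rfl fun p _ => abs_pairSign X p]
  exact Finset.prod_const_one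

lemma abs_bT_le_one {N : ℕ} (E : Finset (Finset (Fin N))) : |bT E| ≤ 1 := by
  have h1 : |bT E| ≤ ∫ X : Finset (Fin N) → ℝ × ℝ, |BE E X| ∂(Measure.pi fun _ => nu) := by
    simpa [Real.norm_eq_abs, bT] using
      norm_integral_le_integral_norm (μ := Measure.pi fun _ => (nu : Measure (ℝ × ℝ))) (BE E)
  have h2 : ∫ X : Finset (Fin N) → ℝ × ℝ, |BE E X| ∂(Measure.pi fun _ => nu) = 1 := by
    rw [integral_congr_ae (Filter.Eventually.of_forall fun X => abs_BE E X)]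
    simp
  rw [h2] at h1; exact h1

lemma trees_one (q : ℕ) (hq2 : 2 ≤ q) : trees q 1 = {(∅ : Finset (Finset (Fin 1)))} := by
  ext E
  simp only [trees, Finset.mem_filter, Finset.mem_univ, true_and, Finset.mem_singleton]
  constructor
  · rintro ⟨-, -, hcount⟩
    have : E.card = 0 := by
      simp only [Nat.sub_self] at hcount
      rcases Nat.mul_eq_zero.mp hcount with h | h
      · omega
      · exact h
    exact Finset.card_eq_zero.mp this
  · rintro rfl
    refine ⟨by simp, ?_, by simp⟩
    intro a b
    have : a = b := Subsingleton.elim a b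
    rw [this]

lemma bT_empty {N : ℕ} : bT (∅ : Finset (Finset (Fin N))) = 1 := by
  have hBE : ∀ X : Finset (Fin N) → ℝ × ℝ, BE (∅ : Finset (Finset (Fin N))) X = 1 := by
    intro X; rw [BE]; simp [Finset.sym2_empty]
  rw [bT]
  rw [integral_congr_ae (Filter.Eventually.of_forall hBE)]
  simp

lemma mu_one (q : ℕ) (hq2 : 2 ≤ q) (β : ℝ) : mu q β 1 = 1 := by
  rw [mu, trees_one q hq2, Finset.sum_singleton, bT_empty]
  simp

lemma rho_nonneg (q : ℕ) (β : ℝ) : 0 ≤ rho q β :=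
  Real.rpow_nonneg (by positivity) _
lemma succ_le_two_pow_real (n : ℕ) : ((n : ℝ) + 1) ≤ 2 ^ n := by
  have h : n + 1 ≤ 2 ^ n := Nat.succ_le_of_lt (Nat.lt_two_pow_self)
  exact_mod_cast h

lemma nat_le_two_pow_real (n : ℕ) : (n : ℝ) ≤ 2 ^ n := by
  have := succ_le_two_pow_real n; linarith

lemma pow_div_factorial_le_exp (x : ℝ) (hx : 0 ≤ x) (k : ℕ) :
    x ^ k / k.factorial ≤ Real.exp x := by
  have h1 : x ^ k / k.factorial ≤ ∑ i ∈ Finset.range (k + 1), x ^ i / i.factorial := by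
    refine Finset.single_le_sum (f := fun i => x ^ i / (i.factorial : ℝ)) ?_ ?_
    · intro i _; positivity
    · exact Finset.self_mem_range_succ k
  exact h1.trans (Real.sum_le_exp_of_nonneg hx (k + 1))

lemma card_trees_le (q : ℕ) (hq2 : 2 ≤ q) (v : ℕ) :
    ((trees q (v + 1)).card : ℝ) ≤ ((v : ℝ) + 1) ^ v * Real.exp (v + 1) := by
  classical
  set k := v / (q - 1) with hk
  have hsub : trees q (v + 1) ⊆
      Finset.powersetCard k ((Finset.univ : Finset (Fin (v + 1))).powersetCard q) := by
    intro E hE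
    rw [trees, Finset.mem_filter] at hE
    obtain ⟨-, hcard, -, hcount⟩ := And.intro hE.1 hE.2
    rw [Finset.mem_powersetCard]
    constructor
    · intro e he
      rw [Finset.mem_powersetCard]
      exact ⟨Finset.subset_univ e, hcard e he⟩
    · have h0 : 0 < q - 1 := by omega
      simp only [Nat.add_sub_cancel] at hcount
      have := Nat.mul_div_cancel_left E.card h0
      rw [hk]
      conv_rhs => rw [← hcount]
      exact this.symm
  have h1 : (trees q (v + 1)).card ≤ Nat.choose ((v + 1).choose q) k := by
    have := Finset.card_le_card hsub
    rwa [Finset.card_powersetCard, Finset.card_powersetCard, Finset.card_univ,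
      Fintype.card_fin] at this
  have hqk : q * k ≤ v + k := by
    have : (q - 1) * k ≤ v := by
      rw [hk, Nat.mul_comm]
      exact Nat.div_mul_le_self v (q - 1)
    have hq1 : q = (q - 1) + 1 := by omega
    calc q * k = (q - 1) * k + k := by nth_rewrite 1 [hq1]; ring
    _ ≤ v + k := by omega
  have hb1 : (1 : ℝ) ≤ (v : ℝ) + 1 := by have : (0:ℝ) ≤ v := Nat.cast_nonneg v; linarith
  calc ((trees q (v + 1)).card : ℝ)
      ≤ (Nat.choose ((v + 1).choose q) k : ℝ) := by exact_mod_cast h1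
    _ ≤ (((v + 1).choose q : ℝ)) ^ k / k.factorial := Nat.choose_le_pow_div k _
    _ ≤ (((v : ℝ) + 1) ^ q) ^ k / k.factorial := by
        gcongr
        exact_mod_cast Nat.choose_le_pow (v + 1) q
    _ = ((v : ℝ) + 1) ^ (q * k) / k.factorial := by rw [← pow_mul]
    _ ≤ ((v : ℝ) + 1) ^ (v + k) / k.factorial := by
        gcongr
    _ = ((v : ℝ) + 1) ^ v * (((v : ℝ) + 1) ^ k / k.factorial) := by
        rw [pow_add]; ring
    _ ≤ ((v : ℝ) + 1) ^ v * Real.exp (v + 1) := by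
        apply mul_le_mul_of_nonneg_left ?_ (by positivity)
        have := pow_div_factorial_le_exp ((v : ℝ) + 1) (by positivity) k
        simpa using this
lemma exp_two_le_nine : Real.exp 2 ≤ 9 := by
  have h1 : Real.exp 1 ≤ 3 := le_of_lt (by
    have := Real.exp_one_lt_d9
    norm_num at this ⊢
    linarith)
  have h2 : Real.exp 2 = Real.exp 1 * Real.exp 1 := by
    rw [← Real.exp_add]; norm_num
  nlinarith [Real.exp_pos 1]

lemma mu_abs_le (q : ℕ) (hq2 : 2 ≤ q) (β : ℝ) (v : ℕ) :
    |mu q β (v + 1)| ≤ 9 * (9 * rho q β) ^ v := by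
  have hρ : 0 ≤ rho q β := rho_nonneg q β
  have hsum : |∑ E ∈ trees q (v + 1), bT E| ≤ ((trees q (v + 1)).card : ℝ) := by
    calc |∑ E ∈ trees q (v + 1), bT E| ≤ ∑ E ∈ trees q (v + 1), |bT E| :=
          Finset.abs_sum_le_sum_abs _ _
      _ ≤ ∑ E ∈ trees q (v + 1), (1 : ℝ) :=
          Finset.sum_le_sum fun E _ => abs_bT_le_one E
      _ = ((trees q (v + 1)).card : ℝ) := by simp
  have hfac : (0 : ℝ) < (v + 1).factorial := by exact_mod_cast (v + 1).factorial_pos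
  have hcard := card_trees_le q hq2 v
  have hpf : ((v : ℝ) + 1) ^ v / (v + 1).factorial ≤ Real.exp (v + 1) := by
    have h1 : ((v : ℝ) + 1) ^ v ≤ ((v : ℝ) + 1) ^ (v + 1) := by
      apply pow_le_pow_right₀ ?_ (by omega)
      have : (0:ℝ) ≤ v := Nat.cast_nonneg v; linarith
    have h2 := pow_div_factorial_le_exp ((v : ℝ) + 1) (by positivity) (v + 1)
    calc ((v : ℝ) + 1) ^ v / (v + 1).factorial
        ≤ ((v : ℝ) + 1) ^ (v + 1) / (v + 1).factorial := by gcongr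
      _ ≤ Real.exp ((v : ℝ) + 1) := by
          have : (((v : ℕ) + 1 : ℕ) : ℝ) = (v : ℝ) + 1 := by push_cast; ring
          rw [← this] at h2 ⊢
          simpa using h2
      _ = Real.exp ((v : ℕ) + 1) := by norm_num
  have hmu : |mu q β (v + 1)| = rho q β ^ v / (v + 1).factorial * |∑ E ∈ trees q (v + 1), bT E| := by
    rw [mu]
    simp only [Nat.add_sub_cancel]
    rw [abs_mul]
    congr 1
    rw [abs_div, abs_of_nonneg (pow_nonneg hρ v), abs_of_pos hfac]
  have hexp : Real.exp ((v:ℝ) + 1) * Real.exp ((v:ℝ) + 1) ≤ 9 ^ (v + 1) := by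
    rw [← Real.exp_add]
    have : ((v:ℝ) + 1) + ((v:ℝ) + 1) = (v + 1 : ℕ) * (2:ℝ) := by push_cast; ring
    rw [this, Real.exp_nat_mul]
    exact pow_le_pow_left₀ (Real.exp_pos 2).le exp_two_le_nine (v + 1)
  calc |mu q β (v + 1)|
      = rho q β ^ v / (v + 1).factorial * |∑ E ∈ trees q (v + 1), bT E| := hmu
    _ ≤ rho q β ^ v / (v + 1).factorial * ((trees q (v + 1)).card : ℝ) := by
        apply mul_le_mul_of_nonneg_left hsum (by positivity)
    _ ≤ rho q β ^ v / (v + 1).factorial * (((v : ℝ) + 1) ^ v * Real.exp (v + 1)) := by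
        apply mul_le_mul_of_nonneg_left ?_ (by positivity)
        simpa using hcard
    _ = rho q β ^ v * ((((v : ℝ) + 1) ^ v / (v + 1).factorial) * Real.exp (v + 1)) := by
        ring
    _ ≤ rho q β ^ v * (Real.exp ((v:ℝ) + 1) * Real.exp ((v:ℝ) + 1)) := by
        apply mul_le_mul_of_nonneg_left ?_ (by positivity)
        apply mul_le_mul_of_nonneg_right ?_ (by positivity)
        convert hpf using 2 <;> push_cast <;> ring
    _ ≤ rho q β ^ v * 9 ^ (v + 1) := by
        apply mul_le_mul_of_nonneg_left hexp (by positivity)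
    _ = 9 * (9 * rho q β) ^ v := by rw [mul_pow]; ring

/-- Threshold for `β`. -/
def betaStar (q : ℕ) : ℝ :=
  Real.sqrt (2 ^ (q + 1) * (1 / 100000) ^ (q - 1) / (q - 1).factorial)

lemma betaStar_pos (q : ℕ) : 0 < betaStar q := by
  apply Real.sqrt_pos.mpr
  positivity

lemma rho_le (q : ℕ) (hq2 : 2 ≤ q) (β : ℝ) (hβ : |β| ≤ betaStar q) :
    rho q β ≤ 1 / 100000 := by
  have hq1 : (0:ℝ) < (q:ℝ) - 1 := by
    have : (2:ℝ) ≤ q := by exact_mod_cast hq2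
    linarith
  have harg : ((q - 1).factorial * β ^ 2 / 2 ^ (q + 1) : ℝ) ≤ (1 / 100000) ^ (q - 1) := by
    have hb2 : β ^ 2 ≤ betaStar q ^ 2 := by
      rw [← sq_abs]
      apply pow_le_pow_left₀ (abs_nonneg β) hβ
    have hsq : betaStar q ^ 2 = 2 ^ (q + 1) * (1 / 100000) ^ (q - 1) / (q - 1).factorial := by
      rw [betaStar, Real.sq_sqrt (by positivity)]
    have hfac : (0:ℝ) < (q - 1).factorial := by exact_mod_cast (q - 1).factorial_pos
    have h2 : (0:ℝ) < 2 ^ (q + 1) := by positivity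
    calc ((q - 1).factorial * β ^ 2 / 2 ^ (q + 1) : ℝ)
        ≤ ((q - 1).factorial * betaStar q ^ 2 / 2 ^ (q + 1) : ℝ) := by gcongr
      _ = (1 / 100000) ^ (q - 1) := by rw [hsq]; field_simp
  have h1 : rho q β ≤ (((1:ℝ) / 100000) ^ (q - 1)) ^ ((q : ℝ) - 1)⁻¹ := by
    rw [rho]
    apply Real.rpow_le_rpow (by positivity) harg (by positivity)
  have h2 : (((1:ℝ) / 100000) ^ (q - 1)) ^ ((q : ℝ) - 1)⁻¹ = 1 / 100000 := by
    have hcast : ((q - 1 : ℕ) : ℝ) = (q : ℝ) - 1 := by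
      have : 1 ≤ q := by omega
      push_cast [Nat.cast_sub this]
      ring
    rw [← Real.rpow_natCast (1 / 100000 : ℝ) (q - 1), ← Real.rpow_mul (by norm_num), hcast,
      mul_inv_cancel₀ (ne_of_gt hq1), Real.rpow_one]
  linarith

lemma summable_geom_bound {f : ℕ → ℝ} {C x : ℝ} (hx0 : 0 ≤ x) (hx1 : x < 1)
    (h : ∀ v, |f v| ≤ C * x ^ v) : Summable f :=
  Summable.of_norm_bounded ((summable_geometric_of_lt_one hx0 hx1).mul_left C)
    (by simpa [Real.norm_eq_abs] using h)

lemma tsum_abs_le_geom {f : ℕ → ℝ} {C x : ℝ} (hx0 : 0 ≤ x) (hx1 : x < 1)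
    (h : ∀ v, |f v| ≤ C * x ^ v) : |∑' v, f v| ≤ C * (1 - x)⁻¹ := by
  have hsum := summable_geom_bound hx0 hx1 h
  have hgeo := (summable_geometric_of_lt_one hx0 hx1).mul_left C
  have habs : Summable fun v => |f v| := hsum.abs
  have hnorm : Summable fun v => ‖f v‖ := by simpa [Real.norm_eq_abs] using habs
  have h1 : ‖∑' v, f v‖ ≤ ∑' v, ‖f v‖ := norm_tsum_le_tsum_norm hnorm
  calc |∑' v, f v| = ‖∑' v, f v‖ := (Real.norm_eq_abs _).symm
    _ ≤ ∑' v, ‖f v‖ := h1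
    _ = ∑' v, |f v| := by simp [Real.norm_eq_abs]
    _ ≤ ∑' v, C * x ^ v := Summable.tsum_le_tsum h habs hgeo
    _ = C * (1 - x)⁻¹ := by rw [tsum_mul_left, tsum_geometric_of_lt_one hx0 hx1]
/-- The candidate derivative of `Φ`. -/
def Gfun (q : ℕ) (β : ℝ) : ℝ → ℝ :=
  fun y => ∑' n : ℕ, mu q β (n + 1) * (((n : ℝ) + 1) * y ^ n)

/-- The candidate second derivative of `Φ`. -/
def G2fun (q : ℕ) (β : ℝ) : ℝ → ℝ :=
  fun y => ∑' n : ℕ, (mu q β (n + 1) * ((n : ℝ) + 1)) * ((n : ℝ) * y ^ (n - 1))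

section deriv

variable {q : ℕ} {β s : ℝ}

lemma term_deriv (q : ℕ) (β : ℝ) (n : ℕ) (y : ℝ) :
    HasDerivAt (fun t : ℝ => mu q β (n + 1) * t ^ (n + 1))
      (mu q β (n + 1) * (((n : ℝ) + 1) * y ^ n)) y := by
  have h := (hasDerivAt_pow (n + 1) y).const_mul (mu q β (n + 1))
  simpa using h

lemma term_deriv2 (q : ℕ) (β : ℝ) (n : ℕ) (y : ℝ) :
    HasDerivAt (fun t : ℝ => mu q β (n + 1) * (((n : ℝ) + 1) * t ^ n))
      ((mu q β (n + 1) * ((n : ℝ) + 1)) * ((n : ℝ) * y ^ (n - 1))) y := by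
  have h := (hasDerivAt_pow n y).const_mul (mu q β (n + 1) * ((n : ℝ) + 1))
  simpa [mul_assoc] using h

lemma hasDerivAt_PhiR (hm : ∀ v, |mu q β (v + 1)| ≤ 9 * s ^ v) (hs0 : 0 ≤ s)
    (hs : s ≤ 1 / 1000) :
    ∀ y ∈ Metric.ball (0 : ℝ) 2, HasDerivAt (PhiR q β) (Gfun q β y) y := by
  have hx1 : 4 * s < 1 := by linarith
  have hu : Summable fun n : ℕ => 9 * (4 * s) ^ n :=
    (summable_geometric_of_lt_one (by linarith) hx1).mul_left 9
  have hbound : ∀ (n : ℕ) (x : ℝ), x ∈ Metric.ball (0 : ℝ) 2 →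
      ‖mu q β (n + 1) * (((n : ℝ) + 1) * x ^ n)‖ ≤ 9 * (4 * s) ^ n := by
    intro n x hx
    have hxle : |x| ≤ 2 := by
      rw [Metric.mem_ball, Real.dist_eq, sub_zero] at hx; linarith
    rw [Real.norm_eq_abs, abs_mul, abs_mul, abs_pow]
    calc |mu q β (n + 1)| * (|(n : ℝ) + 1| * |x| ^ n)
        ≤ (9 * s ^ n) * ((2 : ℝ) ^ n * 2 ^ n) := by
          apply mul_le_mul (hm n) ?_ (by positivity) (by positivity)
          apply mul_le_mul ?_ ?_ (by positivity) (by positivity)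
          · rw [abs_of_nonneg (by positivity)]; exact succ_le_two_pow_real n
          · exact pow_le_pow_left₀ (abs_nonneg x) hxle n
      _ = 9 * (4 * s) ^ n := by
          rw [mul_pow, show (4:ℝ)^n = 2^n * 2^n by rw [← mul_pow]; norm_num]; ring
  have hsum0 : Summable fun n : ℕ => mu q β (n + 1) * (0 : ℝ) ^ (n + 1) := by
    simp only [zero_pow (Nat.succ_ne_zero _), mul_zero]
    exact summable_zero
  intro y hy
  have key := hasDerivAt_tsum_of_isPreconnected hu Metric.isOpen_ball
    (convex_ball (0 : ℝ) 2).isPreconnected (fun n x _ => term_deriv q β n x) hbound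
    (Metric.mem_ball_self (by norm_num)) hsum0 hy
  exact key

lemma hasDerivAt_Gfun (hm : ∀ v, |mu q β (v + 1)| ≤ 9 * s ^ v) (hs0 : 0 ≤ s)
    (hs : s ≤ 1 / 1000) :
    ∀ y ∈ Metric.ball (0 : ℝ) 2, HasDerivAt (Gfun q β) (G2fun q β y) y := by
  have hx1 : 8 * s < 1 := by linarith
  have hu : Summable fun n : ℕ => 9 * (8 * s) ^ n :=
    (summable_geometric_of_lt_one (by linarith) hx1).mul_left 9
  have hbound : ∀ (n : ℕ) (x : ℝ), x ∈ Metric.ball (0 : ℝ) 2 →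
      ‖(mu q β (n + 1) * ((n : ℝ) + 1)) * ((n : ℝ) * x ^ (n - 1))‖ ≤ 9 * (8 * s) ^ n := by
    intro n x hx
    have hxle : |x| ≤ 2 := by
      rw [Metric.mem_ball, Real.dist_eq, sub_zero] at hx; linarith
    rw [Real.norm_eq_abs, abs_mul, abs_mul, abs_mul, abs_pow]
    have h1 : |(n : ℝ) + 1| ≤ 2 ^ n := by
      rw [abs_of_nonneg (by positivity)]; exact succ_le_two_pow_real n
    have h2 : |(n : ℝ)| ≤ 2 ^ n := by
      rw [abs_of_nonneg (Nat.cast_nonneg n)]; exact nat_le_two_pow_real n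
    have h3 : |x| ^ (n - 1) ≤ 2 ^ n := by
      calc |x| ^ (n - 1) ≤ 2 ^ (n - 1) := pow_le_pow_left₀ (abs_nonneg x) hxle _
        _ ≤ 2 ^ n := pow_le_pow_right₀ (by norm_num) (Nat.sub_le n 1)
    calc |mu q β (n + 1)| * |(n : ℝ) + 1| * (|(n : ℝ)| * |x| ^ (n - 1))
        ≤ (9 * s ^ n) * (2 : ℝ) ^ n * ((2 : ℝ) ^ n * 2 ^ n) := by
          apply mul_le_mul ?_ ?_ (by positivity) (by positivity)
          · exact mul_le_mul (hm n) h1 (abs_nonneg _) (by positivity)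
          · exact mul_le_mul h2 h3 (by positivity) (by positivity)
      _ = 9 * (8 * s) ^ n := by
          rw [mul_pow, show (8:ℝ)^n = 2^n * (2^n * 2^n) by rw [← mul_pow, ← mul_pow]; norm_num]
          ring
  have hsum0 : Summable fun n : ℕ => mu q β (n + 1) * (((n : ℝ) + 1) * (0 : ℝ) ^ n) := by
    apply summable_of_ne_finset_zero (s := {0})
    intro n hn
    have hn0 : n ≠ 0 := by simpa using hn
    rw [zero_pow hn0, mul_zero, mul_zero]
  intro y hy
  exact hasDerivAt_tsum_of_isPreconnected hu Metric.isOpen_ball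
    (convex_ball (0 : ℝ) 2).isPreconnected (fun n x _ => term_deriv2 q β n x) hbound
    (Metric.mem_ball_self (by norm_num)) hsum0 hy

end deriv
section near

variable {q : ℕ} {β s : ℝ}

lemma Gfun_near (hm : ∀ v, |mu q β (v + 1)| ≤ 9 * s ^ v) (hs0 : 0 ≤ s)
    (hs : s ≤ 1 / 1000) (h1 : mu q β 1 = 1) {y : ℝ} (hy : |y| ≤ 3 / 2) :
    |Gfun q β y - 1| ≤ 54 * s := by
  set a : ℕ → ℝ := fun n => mu q β (n + 1) * (((n : ℝ) + 1) * y ^ n) with ha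
  have habound : ∀ n, |a n| ≤ 9 * (3 * s) ^ n := by
    intro n
    rw [ha]
    simp only [abs_mul, abs_pow]
    calc |mu q β (n + 1)| * (|(n : ℝ) + 1| * |y| ^ n)
        ≤ (9 * s ^ n) * ((2 : ℝ) ^ n * (3 / 2) ^ n) := by
          apply mul_le_mul (hm n) ?_ (by positivity) (by positivity)
          apply mul_le_mul ?_ (pow_le_pow_left₀ (abs_nonneg y) hy n) (by positivity)
            (by positivity)
          rw [abs_of_nonneg (by positivity)]; exact succ_le_two_pow_real n
      _ = 9 * (3 * s) ^ n := by
          rw [mul_pow, show (3:ℝ)^n = 2^n * (3/2)^n by rw [← mul_pow]; norm_num]; ring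
  have hasum : Summable a := summable_geom_bound (by linarith) (by linarith) habound
  have ha0 : a 0 = 1 := by rw [ha]; simp [h1]
  have hshift : Gfun q β y - 1 = ∑' n, a (n + 1) := by
    have := Summable.tsum_eq_zero_add hasum
    rw [Gfun]
    rw [show (∑' n : ℕ, mu q β (n + 1) * (((n : ℝ) + 1) * y ^ n)) = ∑' n, a n from rfl, this,
      ha0]
    ring
  rw [hshift]
  have hb : ∀ n, |a (n + 1)| ≤ (27 * s) * (3 * s) ^ n := by
    intro n
    calc |a (n + 1)| ≤ 9 * (3 * s) ^ (n + 1) := habound (n + 1)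
      _ = (27 * s) * (3 * s) ^ n := by rw [pow_succ]; ring
  calc |∑' n, a (n + 1)| ≤ (27 * s) * (1 - 3 * s)⁻¹ :=
        tsum_abs_le_geom (by linarith) (by linarith) hb
    _ ≤ (27 * s) * 2 := by
        apply mul_le_mul_of_nonneg_left ?_ (by linarith)
        rw [show (2:ℝ) = (1/2:ℝ)⁻¹ by norm_num]
        apply inv_anti₀ (by norm_num) (by linarith)
    _ = 54 * s := by ring

lemma G2fun_near (hm : ∀ v, |mu q β (v + 1)| ≤ 9 * s ^ v) (hs0 : 0 ≤ s)
    (hs : s ≤ 1 / 1000) {y : ℝ} (hy : |y| ≤ 3 / 2) :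
    |G2fun q β y| ≤ 108 * s := by
  set b : ℕ → ℝ := fun n => (mu q β (n + 1) * ((n : ℝ) + 1)) * ((n : ℝ) * y ^ (n - 1)) with hb
  have hbbound : ∀ n, |b n| ≤ 9 * (6 * s) ^ n := by
    intro n
    rw [hb]
    simp only [abs_mul, abs_pow]
    have h1 : |(n : ℝ) + 1| ≤ 2 ^ n := by
      rw [abs_of_nonneg (by positivity)]; exact succ_le_two_pow_real n
    have h2 : |(n : ℝ)| ≤ 2 ^ n := by
      rw [abs_of_nonneg (Nat.cast_nonneg n)]; exact nat_le_two_pow_real n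
    have h3 : |y| ^ (n - 1) ≤ (3 / 2) ^ n := by
      calc |y| ^ (n - 1) ≤ (3 / 2 : ℝ) ^ (n - 1) := pow_le_pow_left₀ (abs_nonneg y) hy _
        _ ≤ (3 / 2) ^ n := pow_le_pow_right₀ (by norm_num) (Nat.sub_le n 1)
    calc |mu q β (n + 1)| * |(n : ℝ) + 1| * (|(n : ℝ)| * |y| ^ (n - 1))
        ≤ (9 * s ^ n) * (2 : ℝ) ^ n * ((2 : ℝ) ^ n * (3 / 2) ^ n) := by
          apply mul_le_mul ?_ ?_ (by positivity) (by positivity)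
          · exact mul_le_mul (hm n) h1 (abs_nonneg _) (by positivity)
          · exact mul_le_mul h2 h3 (by positivity) (by positivity)
      _ = 9 * (6 * s) ^ n := by
          rw [mul_pow, show (6:ℝ)^n = 2^n * (2^n * (3/2)^n) by rw [← mul_pow, ← mul_pow]; norm_num]
          ring
  have hbsum : Summable b := summable_geom_bound (by linarith) (by linarith) hbbound
  have hb0 : b 0 = 0 := by rw [hb]; simp
  have hshift : G2fun q β y = ∑' n, b (n + 1) := by
    have := Summable.tsum_eq_zero_add hbsum
    rw [G2fun]
    rw [show (∑' n : ℕ, (mu q β (n + 1) * ((n : ℝ) + 1)) * ((n : ℝ) * y ^ (n - 1))) = ∑' n, b n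
      from rfl, this, hb0, zero_add]
  rw [hshift]
  have hbb : ∀ n, |b (n + 1)| ≤ (54 * s) * (6 * s) ^ n := by
    intro n
    calc |b (n + 1)| ≤ 9 * (6 * s) ^ (n + 1) := hbbound (n + 1)
      _ = (54 * s) * (6 * s) ^ n := by rw [pow_succ]; ring
  calc |∑' n, b (n + 1)| ≤ (54 * s) * (1 - 6 * s)⁻¹ :=
        tsum_abs_le_geom (by linarith) (by linarith) hbb
    _ ≤ (54 * s) * 2 := by
        apply mul_le_mul_of_nonneg_left ?_ (by linarith)
        rw [show (2:ℝ) = (1/2:ℝ)⁻¹ by norm_num]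
        apply inv_anti₀ (by norm_num) (by linarith)
    _ = 108 * s := by ring

end near
open scoped NNReal ENNReal in
lemma tsum_shift_c {f : ℕ → ℂ} (h0 : f 0 = 0) : ∑' v : ℕ, f (v + 1) = ∑' v, f v := by
  by_cases hsf : Summable f
  · rw [Summable.tsum_eq_zero_add hsf, h0, zero_add]
  · have hs' : ¬ Summable fun v => f (v + 1) := by
      intro h
      exact hsf ((summable_nat_add_iff 1).mp h)
    rw [tsum_eq_zero_of_not_summable hsf, tsum_eq_zero_of_not_summable hs']

open scoped NNReal ENNReal in
lemma analyticAt_PhiC {q : ℕ} {β s : ℝ} (hm : ∀ v, |mu q β (v + 1)| ≤ 9 * s ^ v)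
    (hs0 : 0 ≤ s) (hs : s ≤ 1 / 1000) :
    ∀ z : ℂ, ‖z‖ < 2 → AnalyticAt ℂ (PhiC q β) z := by
  classical
  set c : ℕ → ℂ := fun n => if n = 0 then 0 else ((mu q β n : ℝ) : ℂ) with hc
  set p : FormalMultilinearSeries ℂ ℂ ℂ :=
    fun n => ContinuousMultilinearMap.mkPiRing ℂ (Fin n) (c n) with hp
  have hnorm : ∀ n, ‖p n‖ = ‖c n‖ := fun n => ContinuousMultilinearMap.norm_mkPiRing (c n)
  have hbound : ∀ n, ‖p n‖ * ((2 : ℝ≥0) : ℝ) ^ n ≤ 18 := by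
    intro n
    rw [hnorm]
    cases n with
    | zero => simp [hc]
    | succ m =>
      have hceq : ‖c (m + 1)‖ = |mu q β (m + 1)| := by
        rw [hc]
        simp [Complex.norm_real, Real.norm_eq_abs]
      have h2s : (2 * s) ^ m ≤ 1 := by
        apply pow_le_one₀ (by linarith) (by linarith)
      calc ‖c (m + 1)‖ * ((2 : ℝ≥0) : ℝ) ^ (m + 1)
          = |mu q β (m + 1)| * 2 ^ (m + 1) := by rw [hceq]; norm_num
        _ ≤ (9 * s ^ m) * 2 ^ (m + 1) := by
            apply mul_le_mul_of_nonneg_right (hm m) (by positivity)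
        _ = 18 * (2 * s) ^ m := by rw [mul_pow]; ring
        _ ≤ 18 := by nlinarith
  have hrad : (2 : ℝ≥0∞) ≤ p.radius := by
    have := p.le_radius_of_bound 18 hbound
    exact_mod_cast this
  have hball := p.hasFPowerSeriesOnBall (lt_of_lt_of_le (by norm_num) hrad)
  have hsum_eq : PhiC q β = p.sum := by
    funext z
    have happ : ∀ n, (p n) (fun _ => z) = c n * z ^ n := by
      intro n
      rw [hp]
      rw [ContinuousMultilinearMap.mkPiRing_apply]
      rw [Finset.prod_const, Finset.card_univ, Fintype.card_fin, smul_eq_mul]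
      ring
    rw [PhiC, FormalMultilinearSeries.sum]
    simp_rw [happ]
    have h0 : c 0 * z ^ 0 = 0 := by rw [hc]; simp
    rw [← tsum_shift_c (f := fun n => c n * z ^ n) h0]
    congr 1
  intro z hz
  rw [hsum_eq]
  apply hball.analyticOnNhd
  have h1 : edist z (0 : ℂ) < (2 : ℝ≥0∞) := by
    rw [edist_zero_right]
    have h2 : (‖z‖₊ : ℝ) < 2 := by rw [coe_nnnorm]; exact hz
    have : ‖z‖₊ < (2 : ℝ≥0) := by exact_mod_cast h2
    rw [enorm_eq_nnnorm]
    exact_mod_cast this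
  exact EMetric.mem_ball.mpr (lt_of_lt_of_le h1 hrad)
/-- For small enough `β*` and `|β| ≤ β*`: the power series `Φ` converges
absolutely on `{|z| ≤ 2}` (hence is analytic on `{|z| < 2}`), and there is a unique
`t* ∈ (1/2, 3/2)` with `t* Φ'(t*) = 1`. -/
theorem Phi_and_tstar (q : ℕ) (hq : Even q) (hq2 : 2 ≤ q) :
    ∃ βs : ℝ, 0 < βs ∧ ∀ β : ℝ, |β| ≤ βs →
      (∀ z : ℂ, ‖z‖ ≤ 2 → Summable (fun v : ℕ => ‖(mu q β (v + 1) : ℂ) * z ^ (v + 1)‖)) ∧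
      (∀ z : ℂ, ‖z‖ < 2 → AnalyticAt ℂ (PhiC q β) z) ∧
      (∃! t : ℝ, t ∈ Set.Ioo (1 / 2 : ℝ) (3 / 2) ∧ t * deriv (PhiR q β) t = 1) := by
  refine ⟨betaStar q, betaStar_pos q, fun β hβ => ?_⟩
  have hρ := rho_le q hq2 β hβ
  have hρ0 := rho_nonneg q β
  set s := 9 * rho q β with hsdef
  clear_value s
  have hs0 : 0 ≤ s := by rw [hsdef]; positivity
  have hs : s ≤ 1 / 1000 := by rw [hsdef]; linarith
  have hm : ∀ v, |mu q β (v + 1)| ≤ 9 * s ^ v := by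
    intro v; rw [hsdef]; exact mu_abs_le q hq2 β v
  have h1 : mu q β 1 = 1 := mu_one q hq2 β
  refine ⟨?_, analyticAt_PhiC hm hs0 hs, ?_⟩
  · -- absolute convergence on ‖z‖ ≤ 2
    intro z hz
    apply Summable.of_nonneg_of_le (fun v => norm_nonneg _) ?_
      ((summable_geometric_of_lt_one (by linarith) (by linarith : 2 * s < 1)).mul_left 18)
    intro v
    rw [norm_mul, norm_pow, Complex.norm_real, Real.norm_eq_abs]
    calc |mu q β (v + 1)| * ‖z‖ ^ (v + 1)
        ≤ (9 * s ^ v) * 2 ^ (v + 1) :=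
          mul_le_mul (hm v) (pow_le_pow_left₀ (norm_nonneg z) hz _) (by positivity)
            (by positivity)
      _ = 18 * (2 * s) ^ v := by rw [mul_pow]; ring
  · -- unique fixed point of t Φ'(t) = 1
    set H : ℝ → ℝ := fun t => t * Gfun q β t with hH
    have hGd := hasDerivAt_PhiR hm hs0 hs
    have hG2d := hasDerivAt_Gfun hm hs0 hs
    have hHd : ∀ y ∈ Metric.ball (0 : ℝ) 2,
        HasDerivAt H (Gfun q β y + y * G2fun q β y) y := by
      intro y hy
      have := (hasDerivAt_id y).mul (hG2d y hy)
      simpa [hH, Pi.mul_def] using this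
    have hmem : ∀ y : ℝ, y ∈ Set.Icc (1 / 2 : ℝ) (3 / 2) → y ∈ Metric.ball (0 : ℝ) 2 := by
      intro y hy
      rw [Set.mem_Icc] at hy
      rw [Metric.mem_ball, Real.dist_eq, sub_zero, abs_lt]
      constructor <;> linarith
    have habs32 : ∀ y : ℝ, y ∈ Set.Icc (1 / 2 : ℝ) (3 / 2) → |y| ≤ 3 / 2 := by
      intro y hy
      rw [Set.mem_Icc] at hy
      rw [abs_le]; constructor <;> linarith
    have hcont : ContinuousOn H (Set.Icc (1 / 2 : ℝ) (3 / 2)) := fun y hy =>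
      ((hHd y (hmem y hy)).continuousAt).continuousWithinAt
    have hmono : StrictMonoOn H (Set.Icc (1 / 2 : ℝ) (3 / 2)) := by
      apply strictMonoOn_of_deriv_pos (convex_Icc _ _) hcont
      intro x hx
      rw [interior_Icc] at hx
      have hxI : x ∈ Set.Icc (1 / 2 : ℝ) (3 / 2) := Set.Ioo_subset_Icc_self hx
      rw [(hHd x (hmem x hxI)).deriv]
      have hg := abs_le.mp (Gfun_near hm hs0 hs h1 (habs32 x hxI))
      have hg2 := G2fun_near hm hs0 hs (habs32 x hxI)
      have hxb : |x| ≤ 3 / 2 := habs32 x hxI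
      have hx2 : |x * G2fun q β x| ≤ (3 / 2) * (108 * s) := by
        rw [abs_mul]
        exact mul_le_mul hxb hg2 (abs_nonneg _) (by norm_num)
      have hx2' := abs_le.mp hx2
      linarith [hg.1, hx2'.1]
    have hI1 : H (1 / 2) < 1 := by
      have hg := abs_le.mp (Gfun_near hm hs0 hs h1 (by rw [abs_of_nonneg (by norm_num : (0:ℝ) ≤ 1/2)]; norm_num))
      have : H (1 / 2) = (1 / 2) * Gfun q β (1 / 2) := rfl
      rw [this]
      nlinarith [hg.2]
    have hI2 : 1 < H (3 / 2) := by
      have hg := abs_le.mp (Gfun_near hm hs0 hs h1 (by rw [abs_of_nonneg (by norm_num : (0:ℝ) ≤ 3/2)]))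
      have : H (3 / 2) = (3 / 2) * Gfun q β (3 / 2) := rfl
      rw [this]
      nlinarith [hg.1]
    have hmid : (1 : ℝ) ∈ Set.Ioo (H (1 / 2)) (H (3 / 2)) := ⟨hI1, hI2⟩
    obtain ⟨t, htmem, htval⟩ :=
      intermediate_value_Ioo (by norm_num : (1 / 2 : ℝ) ≤ 3 / 2) hcont hmid
    have hderiv_eq : ∀ y ∈ Set.Ioo (1 / 2 : ℝ) (3 / 2), deriv (PhiR q β) y = Gfun q β y := by
      intro y hy
      exact (hGd y (hmem y (Set.Ioo_subset_Icc_self hy))).deriv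
    refine ⟨t, ⟨htmem, ?_⟩, ?_⟩
    · rw [hderiv_eq t htmem]
      exact htval
    · rintro y ⟨hy, hyv⟩
      have hHy : H y = 1 := by
        rw [hH]
        dsimp only
        rw [← hderiv_eq y hy]
        exact hyv
      exact hmono.injOn (Set.Ioo_subset_Icc_self hy) (Set.Ioo_subset_Icc_self htmem)
        (hHy.trans htval.symm)

end SYK
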